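/- Let G be a compact abelian topological group and H a closed subgroup of G. Then λ(G) ≤ λ(G/H), where λ denotes the Lehmer constant. -/

import Mathlib

open MeasureTheory Finset

/-- `f` is a finite integer-coefficient linear combination of continuous characters of `G`. -/
def IsCharComb (G : Type*) [CommGroup G] [TopologicalSpace G] (f : G → ℂ) : Prop :=
  ∃ (s : Finset (ContinuousMonoidHom G Circle)) (c : ContinuousMonoidHom G Circle → ℤ),
    f = fun x => ∑ χ ∈ s, (c χ : ℂ) * (χ x : ℂ)

/-- Logarithmic Mahler measure of `f` with respect to the measure `μ`. -/
noncomputable def logMahler {G : Type*} [MeasurableSpace G] (μ : Measure G) (f : G → ℂ) : ℝ :=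
  ∫ x, Real.log ‖f x‖ ∂μ

/-- The Lehmer constant of a compact abelian group `G` with Haar measure `μ`. -/
noncomputable def lehmer (G : Type*) [CommGroup G] [TopologicalSpace G] [MeasurableSpace G]
    (μ : Measure G) : ℝ :=
  sInf {r : ℝ | ∃ f : G → ℂ, IsCharComb G f ∧ logMahler μ f = r ∧ 0 < r}

/-!
Pulling back along the quotient map `π : G → G/H` sends character combinations of `G/H` to
character combinations of `G`, and it preserves the Mahler measure because `π` pushes the Haar
probability measure of `G` forward to that of `G/H`. So every positive Mahler measure on `G/H`
is one on `G`, and the infimum over the larger set is smaller.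
-/

namespace IsCharComb

variable {G K : Type*} [CommGroup G] [TopologicalSpace G] [CommGroup K] [TopologicalSpace K]

theorem intCast (n : ℤ) : IsCharComb G fun _ => (n : ℂ) :=
  ⟨{1}, fun _ => n, by simp⟩

theorem continuous {f : G → ℂ} (hf : IsCharComb G f) : Continuous f := by
  obtain ⟨s, c, rfl⟩ := hf
  fun_prop

theorem comp {f : K → ℂ} (hf : IsCharComb K f) (φ : ContinuousMonoidHom G K) :
    IsCharComb G (f ∘ φ) := by
  classical
  obtain ⟨s, c, rfl⟩ := hf
  let pullback (χ : ContinuousMonoidHom K Circle) : ContinuousMonoidHom G Circle := χ.comp φ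
  -- a pulled-back character collects the coefficients of all characters in its fibre
  refine ⟨s.image pullback, fun ψ => ∑ χ ∈ s with pullback χ = ψ, c χ, funext fun x => ?_⟩
  refine (Finset.sum_image' _ fun χ _ => ?_).symm
  push_cast
  rw [Finset.sum_mul]
  refine Finset.sum_congr rfl fun χ' hχ' => ?_
  change _ = _ * ((pullback χ' x : Circle) : ℂ)
  rw [(Finset.mem_filter.1 hχ').2]

end IsCharComb

theorem logMahler_const {G : Type*} [MeasurableSpace G] (μ : Measure G) [IsProbabilityMeasure μ]
    (z : ℂ) : logMahler μ (fun _ => z) = Real.log ‖z‖ := by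
  simp [logMahler]

theorem logMahler_map {G K : Type*} [MeasurableSpace G] [MeasurableSpace K] {μ : Measure G}
    {φ : G → K} (hφ : AEMeasurable φ μ) {f : K → ℂ} (hf : Measurable f) :
    logMahler (μ.map φ) f = logMahler μ (f ∘ φ) :=
  integral_map hφ (Real.measurable_log.comp hf.norm).aestronglyMeasurable

theorem map_eq_of_isHaarMeasure_of_isProbabilityMeasure {G K : Type*} [Group G]
    [TopologicalSpace G] [ContinuousMul G] [MeasurableSpace G] [BorelSpace G]
    [Group K] [TopologicalSpace K] [IsTopologicalGroup K] [LocallyCompactSpace K]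
    [MeasurableSpace K] [BorelSpace K] (μ : Measure G) [μ.IsHaarMeasure] [IsProbabilityMeasure μ]
    (ν : Measure K) [ν.IsHaarMeasure] [IsProbabilityMeasure ν] (φ : G →* K) (hφ : Continuous φ)
    (hφ_surj : Function.Surjective φ) : μ.map φ = ν := by
  have := Measure.isHaarMeasure_map_of_isFiniteMeasure μ φ hφ hφ_surj
  have := Measure.isProbabilityMeasure_map (μ := μ) hφ.measurable.aemeasurable
  exact Measure.isHaarMeasure_eq_of_isProbabilityMeasure _ ν

theorem lehmer_le_lehmer_of_forall_exists {G K : Type*} [CommGroup G] [TopologicalSpace G]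
    [MeasurableSpace G] [CommGroup K] [TopologicalSpace K] [MeasurableSpace K] (μ : Measure G)
    (ν : Measure K) [IsProbabilityMeasure ν]
    (h : ∀ f, IsCharComb K f → ∃ g, IsCharComb G g ∧ logMahler μ g = logMahler ν f) :
    lehmer G μ ≤ lehmer K ν := by
  refine csInf_le_csInf ⟨0, fun r ⟨_, _, _, hr⟩ => hr.le⟩ ?_ ?_
  · refine ⟨Real.log 2, _, IsCharComb.intCast 2, ?_, Real.log_pos one_lt_two⟩
    simp [logMahler_const]
  · rintro r ⟨f, hf, rfl, hr⟩
    obtain ⟨g, hg, hgf⟩ := h f hf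
    exact ⟨g, hg, hgf, hr⟩

theorem lehmer_le_lehmer_quotient_general {G : Type*} [CommGroup G] [TopologicalSpace G]
    [IsTopologicalGroup G] [CompactSpace G] [MeasurableSpace G] [BorelSpace G]
    (μ : Measure G) [μ.IsHaarMeasure] [IsProbabilityMeasure μ]
    (H : Subgroup G)
    [MeasurableSpace (G ⧸ H)] [BorelSpace (G ⧸ H)]
    (ν : Measure (G ⧸ H)) [ν.IsHaarMeasure] [IsProbabilityMeasure ν] :
    lehmer G μ ≤ lehmer (G ⧸ H) ν := by
  let π : ContinuousMonoidHom G (G ⧸ H) := ⟨QuotientGroup.mk' H, continuous_quotient_mk'⟩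
  have hπ : μ.map π = ν :=
    map_eq_of_isHaarMeasure_of_isProbabilityMeasure μ ν _ (map_continuous π)
      (QuotientGroup.mk'_surjective H)
  refine lehmer_le_lehmer_of_forall_exists μ ν fun f hf => ⟨f ∘ π, hf.comp π, ?_⟩
  rw [← hπ, logMahler_map (map_continuous π).aemeasurable hf.continuous.measurable]

/-- Lemma 2.2: if `H` is a closed subgroup of the compact abelian group `G`, then
`λ(G) ≤ λ(G/H)`. -/
theorem lehmer_le_lehmer_quotient {G : Type*} [CommGroup G] [TopologicalSpace G]
    [IsTopologicalGroup G] [CompactSpace G] [MeasurableSpace G] [BorelSpace G]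
    (μ : Measure G) [μ.IsHaarMeasure] [IsProbabilityMeasure μ]
    (H : Subgroup G) (hH : IsClosed (H : Set G))
    [MeasurableSpace (G ⧸ H)] [BorelSpace (G ⧸ H)]
    (ν : Measure (G ⧸ H)) [ν.IsHaarMeasure] [IsProbabilityMeasure ν] :
    lehmer G μ ≤ lehmer (G ⧸ H) ν :=
  lehmer_le_lehmer_quotient_general μ H ν
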